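/- arXiv:1912.03648 — 2 statements merged into one kernel-verified Lean document; each statement's English description precedes it below -/
import Mathlib

section
/- Suppose A, Z ∈ ℂ^{M×N} satisfy A = W + L₁ + E₁ and Z* = W† + L₂ + E₂, where rank(L₁), rank(L₂) ≤ R, ‖E₁‖_F, ‖E₂‖_F ≤ ε, and W† is the Moore–Penrose pseudoinverse of W. Then A - A Z* A = L + E where rank(L) ≤ 3R and ‖E‖_F ≤ ε(1 + ‖I - A Z*‖₂ + ‖A‖₂²) + ε²‖A‖₂. -/
open Matrix

noncomputable def frobNorm {m n : ℕ} (A : Matrix (Fin m) (Fin n) ℂ) : ℝ :=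
  Real.sqrt (∑ i, ∑ j, ‖A i j‖ ^ 2)

noncomputable def specNorm {m n : ℕ} (A : Matrix (Fin m) (Fin n) ℂ) : ℝ :=
  ‖LinearMap.toContinuousLinearMap (Matrix.toEuclideanLin A)‖

/-- A matrix `Wd` satisfies the Moore–Penrose conditions for `W`. -/
def IsMoorePenrose {m n : ℕ} (W : Matrix (Fin m) (Fin n) ℂ)
    (Wd : Matrix (Fin n) (Fin m) ℂ) : Prop :=
  W * Wd * W = W ∧ Wd * W * Wd = Wd ∧ (W * Wd)ᴴ = W * Wd ∧ (Wd * W)ᴴ = Wd * W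

section Helpers

variable {m n k : ℕ}

lemma frobNorm_nonneg (A : Matrix (Fin m) (Fin n) ℂ) : 0 ≤ frobNorm A :=
  Real.sqrt_nonneg _

lemma specNorm_nonneg (A : Matrix (Fin m) (Fin n) ℂ) : 0 ≤ specNorm A :=
  norm_nonneg _

lemma frobNorm_sq (A : Matrix (Fin m) (Fin n) ℂ) :
    frobNorm A ^ 2 = ∑ i, ∑ j, ‖A i j‖ ^ 2 := by
  rw [frobNorm, Real.sq_sqrt (by positivity)]

lemma euclid_norm_sq (f : Fin m → ℂ) :
    ‖(WithLp.equiv 2 (Fin m → ℂ)).symm f‖ ^ 2 = ∑ i, ‖f i‖ ^ 2 := by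
  rw [EuclideanSpace.norm_eq, Real.sq_sqrt (by positivity)]
  simp

lemma frobNorm_sq_cols (A : Matrix (Fin m) (Fin n) ℂ) :
    frobNorm A ^ 2 = ∑ j, ‖(WithLp.equiv 2 (Fin m → ℂ)).symm (fun i => A i j)‖ ^ 2 := by
  rw [frobNorm_sq, Finset.sum_comm]
  exact Finset.sum_congr rfl fun j _ => (euclid_norm_sq _).symm

lemma frobNorm_eq_euclid (A : Matrix (Fin m) (Fin n) ℂ) :
    frobNorm A = ‖(WithLp.equiv 2 (Fin m × Fin n → ℂ)).symm (fun p => A p.1 p.2)‖ := by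
  rw [EuclideanSpace.norm_eq, frobNorm]
  congr 1
  rw [Fintype.sum_prod_type]
  simp

lemma frobNorm_add_le (A B : Matrix (Fin m) (Fin n) ℂ) :
    frobNorm (A + B) ≤ frobNorm A + frobNorm B := by
  rw [frobNorm_eq_euclid, frobNorm_eq_euclid, frobNorm_eq_euclid]
  exact norm_add_le ((WithLp.equiv 2 (Fin m × Fin n → ℂ)).symm (fun p => A p.1 p.2))
    ((WithLp.equiv 2 (Fin m × Fin n → ℂ)).symm (fun p => B p.1 p.2))

lemma frobNorm_conjTranspose (A : Matrix (Fin m) (Fin n) ℂ) :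
    frobNorm Aᴴ = frobNorm A := by
  rw [frobNorm, frobNorm, Finset.sum_comm]
  simp [conjTranspose_apply]

lemma frobNorm_mul_le_spec (X : Matrix (Fin m) (Fin n) ℂ) (Y : Matrix (Fin n) (Fin k) ℂ) :
    frobNorm (X * Y) ≤ specNorm X * frobNorm Y := by
  have h2 : frobNorm (X * Y) ^ 2 ≤ specNorm X ^ 2 * frobNorm Y ^ 2 := by
    rw [frobNorm_sq_cols, frobNorm_sq_cols, Finset.mul_sum]
    refine Finset.sum_le_sum fun j _ => ?_
    have hcol : (WithLp.equiv 2 (Fin m → ℂ)).symm (fun i => (X * Y) i j)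
        = LinearMap.toContinuousLinearMap (Matrix.toEuclideanLin X)
            ((WithLp.equiv 2 (Fin n → ℂ)).symm (fun i => Y i j)) := by
      rw [LinearMap.coe_toContinuousLinearMap', Matrix.toEuclideanLin_apply_piLp_toLp]
      congr 1
    rw [hcol, ← mul_pow]
    refine pow_le_pow_left₀ (norm_nonneg _) ?_ 2
    exact (LinearMap.toContinuousLinearMap (Matrix.toEuclideanLin X)).le_opNorm _
  calc frobNorm (X * Y) = Real.sqrt (frobNorm (X * Y) ^ 2) :=
        (Real.sqrt_sq (frobNorm_nonneg _)).symm
    _ ≤ Real.sqrt (specNorm X ^ 2 * frobNorm Y ^ 2) := Real.sqrt_le_sqrt h2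
    _ = specNorm X * frobNorm Y := by
        rw [← mul_pow, Real.sqrt_sq (mul_nonneg (specNorm_nonneg X) (frobNorm_nonneg Y))]

section L2

open scoped Matrix.Norms.L2Operator

lemma specNorm_eq_l2 (A : Matrix (Fin m) (Fin n) ℂ) : specNorm A = ‖A‖ := rfl

lemma specNorm_conjTranspose (A : Matrix (Fin m) (Fin n) ℂ) : specNorm Aᴴ = specNorm A := by
  rw [specNorm_eq_l2, specNorm_eq_l2, Matrix.l2_opNorm_conjTranspose]

lemma specNorm_neg (A : Matrix (Fin m) (Fin n) ℂ) : specNorm (-A) = specNorm A := by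
  rw [specNorm_eq_l2, specNorm_eq_l2, norm_neg]

lemma specNorm_proj_le (P : Matrix (Fin n) (Fin n) ℂ) (h1 : Pᴴ = P) (h2 : P * P = P) :
    specNorm P ≤ 1 := by
  rw [specNorm_eq_l2]
  have h := Matrix.l2_opNorm_conjTranspose_mul_self P
  rw [h1, h2] at h
  nlinarith [norm_nonneg P]

end L2

section Frob

attribute [local instance] Matrix.frobeniusSeminormedAddCommGroup

lemma frobNorm_eq_frobenius (A : Matrix (Fin m) (Fin n) ℂ) : frobNorm A = ‖A‖ := by
  rw [Matrix.frobenius_norm_def, frobNorm, Real.sqrt_eq_rpow]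
  congr 1
  refine Finset.sum_congr rfl fun i _ => Finset.sum_congr rfl fun j _ => ?_
  rw [Real.rpow_two]

lemma frobNorm_mul_le_frob (X : Matrix (Fin m) (Fin n) ℂ) (Y : Matrix (Fin n) (Fin k) ℂ) :
    frobNorm (X * Y) ≤ frobNorm X * frobNorm Y := by
  rw [frobNorm_eq_frobenius, frobNorm_eq_frobenius, frobNorm_eq_frobenius]
  exact Matrix.frobenius_norm_mul X Y

end Frob

lemma frobNorm_mul_spec_le (X : Matrix (Fin m) (Fin n) ℂ) (Y : Matrix (Fin n) (Fin k) ℂ) :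
    frobNorm (X * Y) ≤ frobNorm X * specNorm Y := by
  calc frobNorm (X * Y) = frobNorm ((X * Y)ᴴ) := (frobNorm_conjTranspose _).symm
    _ = frobNorm (Yᴴ * Xᴴ) := by rw [conjTranspose_mul]
    _ ≤ specNorm Yᴴ * frobNorm Xᴴ := frobNorm_mul_le_spec _ _
    _ = frobNorm X * specNorm Y := by
        rw [specNorm_conjTranspose, frobNorm_conjTranspose, mul_comm]

lemma matrix_rank_add_le (A B : Matrix (Fin m) (Fin n) ℂ) :
    (A + B).rank ≤ A.rank + B.rank := by
  rw [Matrix.rank, Matrix.rank, Matrix.rank, Matrix.mulVecLin_add]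
  have hsub : LinearMap.range (A.mulVecLin + B.mulVecLin)
      ≤ LinearMap.range A.mulVecLin ⊔ LinearMap.range B.mulVecLin := by
    rintro x ⟨y, rfl⟩
    exact Submodule.add_mem_sup ⟨y, rfl⟩ ⟨y, rfl⟩
  exact (Submodule.finrank_mono hsub).trans
    (Submodule.finrank_add_le_finrank_add_finrank _ _)

lemma az_key {M N : ℕ} (W L₁ E₁ : Matrix (Fin M) (Fin N) ℂ)
    (Wd L₂ E₂ : Matrix (Fin N) (Fin M) ℂ) :
    (W + L₁ + E₁) - (W + L₁ + E₁) * (Wd + L₂ + E₂) * (W + L₁ + E₁) =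
      (((1 - (W + L₁ + E₁) * (Wd + L₂ + E₂) + (W + L₁ + E₁) * E₂) * L₁
          + L₁ * (-(Wd * W)) + (-(W + L₁ + E₁)) * L₂ * W)
        + ((1 - (W + L₁ + E₁) * (Wd + L₂ + E₂)) * E₁ + E₁ * (-(Wd * W))
          + (-(W + L₁ + E₁)) * E₂ * (W + L₁ + E₁) + (W + L₁ + E₁) * E₂ * E₁))
      + (W - W * Wd * W) := by
  simp only [Matrix.add_mul, Matrix.mul_add, Matrix.sub_mul, Matrix.mul_sub, Matrix.one_mul,
    Matrix.mul_one, Matrix.neg_mul, Matrix.mul_neg, Matrix.mul_assoc]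
  abel

end Helpers

/-- **Splitting lemma.** If `A = W + L₁ + E₁` and `Z* = W† + L₂ + E₂` with
`L₁, L₂` of rank at most `R` and `E₁, E₂` of Frobenius norm at most `ε`,
then `A - A Z* A = L + E` with `rank L ≤ 3R` and
`‖E‖_F ≤ ε(1 + ‖I - AZ*‖₂ + ‖A‖₂²) + ε²‖A‖₂`. -/
theorem az_splitting {M N : ℕ} (A Z W : Matrix (Fin M) (Fin N) ℂ)
    (Wd : Matrix (Fin N) (Fin M) ℂ) (hWd : IsMoorePenrose W Wd)
    (L₁ : Matrix (Fin M) (Fin N) ℂ) (E₁ : Matrix (Fin M) (Fin N) ℂ)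
    (L₂ : Matrix (Fin N) (Fin M) ℂ) (E₂ : Matrix (Fin N) (Fin M) ℂ)
    (R : ℕ) (ε : ℝ)
    (hA : A = W + L₁ + E₁)
    (hZ : Zᴴ = Wd + L₂ + E₂)
    (hL₁ : L₁.rank ≤ R) (hL₂ : L₂.rank ≤ R)
    (hE₁ : frobNorm E₁ ≤ ε) (hE₂ : frobNorm E₂ ≤ ε) :
    ∃ (L E : Matrix (Fin M) (Fin N) ℂ),
      A - A * Zᴴ * A = L + E ∧ L.rank ≤ 3 * R ∧
      frobNorm E ≤
        ε * (1 + specNorm ((1 : Matrix (Fin M) (Fin M) ℂ) - A * Zᴴ) + specNorm A ^ 2)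
          + ε ^ 2 * specNorm A := by
  obtain ⟨h1, h2, h3, h4⟩ := hWd
  have hε : 0 ≤ ε := (frobNorm_nonneg E₁).trans hE₁
  refine ⟨(1 - A * Zᴴ + A * E₂) * L₁ + L₁ * (-(Wd * W)) + (-A) * L₂ * W,
      (1 - A * Zᴴ) * E₁ + E₁ * (-(Wd * W)) + (-A) * E₂ * A + A * E₂ * E₁, ?_, ?_, ?_⟩
  · rw [hA, hZ, az_key, h1, sub_self, add_zero]
  · have r1 : ((1 - A * Zᴴ + A * E₂) * L₁).rank ≤ R :=
      (Matrix.rank_mul_le_right _ _).trans hL₁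
    have r2 : (L₁ * (-(Wd * W))).rank ≤ R :=
      (Matrix.rank_mul_le_left _ _).trans hL₁
    have r3 : ((-A) * L₂ * W).rank ≤ R :=
      ((Matrix.rank_mul_le_left _ _).trans (Matrix.rank_mul_le_right _ _)).trans hL₂
    calc ((1 - A * Zᴴ + A * E₂) * L₁ + L₁ * (-(Wd * W)) + (-A) * L₂ * W).rank
        ≤ ((1 - A * Zᴴ + A * E₂) * L₁ + L₁ * (-(Wd * W))).rank + ((-A) * L₂ * W).rank :=
          matrix_rank_add_le _ _
      _ ≤ (((1 - A * Zᴴ + A * E₂) * L₁).rank + (L₁ * (-(Wd * W))).rank)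
            + ((-A) * L₂ * W).rank :=
          Nat.add_le_add_right (matrix_rank_add_le _ _) _
      _ ≤ 3 * R := by omega
  · have hPherm : (Wd * W)ᴴ = Wd * W := h4
    have hPidem : (Wd * W) * (Wd * W) = Wd * W := by
      rw [← Matrix.mul_assoc, Matrix.mul_assoc Wd W Wd, ← Matrix.mul_assoc, h2]
    have hPle : specNorm (-(Wd * W)) ≤ 1 := by
      rw [specNorm_neg]
      exact specNorm_proj_le _ hPherm hPidem
    have t1 : frobNorm ((1 - A * Zᴴ) * E₁)
        ≤ specNorm (1 - A * Zᴴ) * ε :=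
      (frobNorm_mul_le_spec _ _).trans
        (mul_le_mul_of_nonneg_left hE₁ (specNorm_nonneg _))
    have t2 : frobNorm (E₁ * (-(Wd * W))) ≤ ε := by
      calc frobNorm (E₁ * (-(Wd * W))) ≤ frobNorm E₁ * specNorm (-(Wd * W)) :=
            frobNorm_mul_spec_le _ _
        _ ≤ ε * 1 := mul_le_mul hE₁ hPle (specNorm_nonneg _) hε
        _ = ε := mul_one ε
    have t3 : frobNorm ((-A) * E₂ * A) ≤ specNorm A * ε * specNorm A := by
      calc frobNorm ((-A) * E₂ * A) ≤ frobNorm ((-A) * E₂) * specNorm A :=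
            frobNorm_mul_spec_le _ _
        _ ≤ (specNorm (-A) * frobNorm E₂) * specNorm A :=
            mul_le_mul_of_nonneg_right (frobNorm_mul_le_spec _ _) (specNorm_nonneg _)
        _ ≤ specNorm A * ε * specNorm A := by
            rw [specNorm_neg]
            exact mul_le_mul_of_nonneg_right
              (mul_le_mul_of_nonneg_left hE₂ (specNorm_nonneg _)) (specNorm_nonneg _)
    have t4 : frobNorm (A * E₂ * E₁) ≤ specNorm A * (ε * ε) := by
      calc frobNorm (A * E₂ * E₁) = frobNorm (A * (E₂ * E₁)) := by rw [Matrix.mul_assoc]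
        _ ≤ specNorm A * frobNorm (E₂ * E₁) := frobNorm_mul_le_spec _ _
        _ ≤ specNorm A * (frobNorm E₂ * frobNorm E₁) :=
            mul_le_mul_of_nonneg_left (frobNorm_mul_le_frob _ _) (specNorm_nonneg _)
        _ ≤ specNorm A * (ε * ε) :=
            mul_le_mul_of_nonneg_left
              (mul_le_mul hE₂ hE₁ (frobNorm_nonneg _) hε) (specNorm_nonneg _)
    have tri : frobNorm ((1 - A * Zᴴ) * E₁ + E₁ * (-(Wd * W)) + (-A) * E₂ * A + A * E₂ * E₁)
        ≤ frobNorm ((1 - A * Zᴴ) * E₁) + frobNorm (E₁ * (-(Wd * W)))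
          + frobNorm ((-A) * E₂ * A) + frobNorm (A * E₂ * E₁) := by
      calc frobNorm ((1 - A * Zᴴ) * E₁ + E₁ * (-(Wd * W)) + (-A) * E₂ * A + A * E₂ * E₁)
          ≤ frobNorm ((1 - A * Zᴴ) * E₁ + E₁ * (-(Wd * W)) + (-A) * E₂ * A)
            + frobNorm (A * E₂ * E₁) := frobNorm_add_le _ _
        _ ≤ (frobNorm ((1 - A * Zᴴ) * E₁ + E₁ * (-(Wd * W))) + frobNorm ((-A) * E₂ * A))
            + frobNorm (A * E₂ * E₁) := add_le_add_left (frobNorm_add_le _ _) _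
        _ ≤ ((frobNorm ((1 - A * Zᴴ) * E₁) + frobNorm (E₁ * (-(Wd * W))))
              + frobNorm ((-A) * E₂ * A)) + frobNorm (A * E₂ * E₁) :=
            add_le_add_left (add_le_add_left (frobNorm_add_le _ _) _) _
    nlinarith [tri, t1, t2, t3, t4]
end

section
/- Let A ∈ ℂ^{M×N} have SVD A = U₁Σ₁V₁* + U₂Σ₂V₂* with rank(U₁Σ₁V₁*) = r, and let Ω ∈ ℝ^{N×(r+p)}. Set Ω₁ = V₁*Ω and Ω₂ = V₂*Ω, and suppose Ω₁ has a right inverse, i.e. Ω₁ Ω₁† = I_{r×r}. Then with à = AΩ and L = U₁Σ₁V₁*, one has L = à Ω₁† V₁* − U₂Σ₂Ω₂Ω₁† V₁*. -/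
open Matrix

theorem Matrix.mul_eq_mul_mul_mul_mul_of_mul_mul_eq_one {m n k l α : Type*}
    [Fintype n] [Fintype k] [Fintype l] [DecidableEq l] [Semiring α]
    (X : Matrix m l α) (B : Matrix l n α) (C : Matrix n k α) (D : Matrix k l α)
    (h : B * C * D = 1) :
    X * B = X * B * C * D * B :=
  calc X * B = X * (B * C * D) * B := by rw [h, Matrix.mul_one]
    _ = X * B * C * D * B := by simp only [Matrix.mul_assoc]

theorem randomized_svd_L_identity_general {M N r s p : ℕ}
    (A : Matrix (Fin M) (Fin N) ℂ)
    (U₁ : Matrix (Fin M) (Fin r) ℂ) (U₂ : Matrix (Fin M) (Fin s) ℂ)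
    (V₁ : Matrix (Fin N) (Fin r) ℂ) (V₂ : Matrix (Fin N) (Fin s) ℂ)
    (S₁ : Matrix (Fin r) (Fin r) ℂ) (S₂ : Matrix (Fin s) (Fin s) ℂ)
    (Ω : Matrix (Fin N) (Fin (r + p)) ℝ)
    (Ω₁d : Matrix (Fin (r + p)) (Fin r) ℂ)
    (hA : A = U₁ * S₁ * V₁ᴴ + U₂ * S₂ * V₂ᴴ)
    (hright : (V₁ᴴ * Ω.map Complex.ofReal) * Ω₁d = 1) :
    U₁ * S₁ * V₁ᴴ =
      (A * Ω.map Complex.ofReal) * Ω₁d * V₁ᴴ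
        - U₂ * S₂ * (V₂ᴴ * Ω.map Complex.ofReal) * Ω₁d * V₁ᴴ := by
  subst hA
  calc U₁ * S₁ * V₁ᴴ = U₁ * S₁ * V₁ᴴ * Ω.map Complex.ofReal * Ω₁d * V₁ᴴ :=
        Matrix.mul_eq_mul_mul_mul_mul_of_mul_mul_eq_one _ _ _ _ hright
    _ = _ := by
        simp only [Matrix.add_mul, Matrix.mul_assoc]
        abel

/-- Key identity in the randomized SVD analysis: with `A = U₁Σ₁V₁* + U₂Σ₂V₂*`,
`Ã = AΩ`, `Ω₁ = V₁*Ω`, `Ω₂ = V₂*Ω`, and `Ω₁Ω₁† = I`, one has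
`L = ÃΩ₁†V₁* − U₂Σ₂Ω₂Ω₁†V₁*` for `L = U₁Σ₁V₁*`. -/
theorem randomized_svd_L_identity {M N r s p : ℕ}
    (A : Matrix (Fin M) (Fin N) ℂ)
    (U₁ : Matrix (Fin M) (Fin r) ℂ) (U₂ : Matrix (Fin M) (Fin s) ℂ)
    (V₁ : Matrix (Fin N) (Fin r) ℂ) (V₂ : Matrix (Fin N) (Fin s) ℂ)
    (S₁ : Matrix (Fin r) (Fin r) ℂ) (S₂ : Matrix (Fin s) (Fin s) ℂ)
    (Ω : Matrix (Fin N) (Fin (r + p)) ℝ)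
    (Ω₁d : Matrix (Fin (r + p)) (Fin r) ℂ)
    (hA : A = U₁ * S₁ * V₁ᴴ + U₂ * S₂ * V₂ᴴ)
    (hrank : (U₁ * S₁ * V₁ᴴ).rank = r)
    (hright : (V₁ᴴ * Ω.map Complex.ofReal) * Ω₁d = 1) :
    U₁ * S₁ * V₁ᴴ =
      (A * Ω.map Complex.ofReal) * Ω₁d * V₁ᴴ
        - U₂ * S₂ * (V₂ᴴ * Ω.map Complex.ofReal) * Ω₁d * V₁ᴴ :=
  randomized_svd_L_identity_general A U₁ U₂ V₁ V₂ S₁ S₂ Ω Ω₁d hA hright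
end
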